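/- arXiv:0902.2924 — 2 statements merged into one kernel-verified Lean document; each statement's English description precedes it below -/
import Mathlib

section
/- Proposition 2.1: If Θ is the closed ℓ¹-ball 𝔅^q_c = {θ ∈ ℝ^q : ‖θ‖₁ ≤ c} for some c > 0 and q ≥ 1, π is the uniform probability measure (normalized Lebesgue measure) on Θ, R: Θ → ℝ is Lipschitz with constant C with respect to the ℓ¹ norm, and θ̄ ∈ Θ is a minimizer of R with ‖θ̄‖₁ < c, then sup_{γ > e} [ −log ∫_Θ exp(−γ(R(θ) − R(θ̄))) dπ(θ) ] / log γ ≤ q · ( 1 + log( c · max{ Ce/q , 1/(c − ‖θ̄‖₁) } ) ). -/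
open MeasureTheory ProbabilityTheory Pointwise

/-! On the ℓ¹-ball of radius `r` around `θ̄` the integrand is at least `exp (-γ C r)`; this ball
lies in `𝔅^q_c` as soon as `r ≤ c - ‖θ̄‖₁`, and its `π`-mass is `(r / c) ^ q`. Hence
`-log ∫ ≤ γ C r + q log (c / r)`, and the radius `r = min (q / (γ C)) (c - ‖θ̄‖₁)` turns this into
`q log γ + q log (c · max (C e / q) (1 / (c - ‖θ̄‖₁)))`, which is at most `log γ` times the
right-hand side because `log γ ≥ 1`. -/

section CondIntegral

variable {α : Type*} [MeasurableSpace α] {μ : Measure α} {S B : Set α} {f : α → ℝ} {m : ℝ}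

lemma mul_measureReal_div_le_integral_cond (hB : MeasurableSet B) (hBS : B ⊆ S) (hS : μ S ≠ ⊤)
    (hf : IntegrableOn f S μ) (hf0 : 0 ≤ f) (hm : ∀ x ∈ B, m ≤ f x) :
    m * (μ.real B / μ.real S) ≤ ∫ x, f x ∂μ[|S] := by
  have hB_le : m * μ.real B ≤ ∫ x in S, f x ∂μ :=
    (setIntegral_ge_of_const_le_real hB (measure_ne_top_of_subset hBS hS) hm
      (hf.mono_set hBS)).trans (setIntegral_mono_set hf (ae_of_all _ hf0) hBS.eventuallyLE)
  rw [ProbabilityTheory.cond, integral_smul_measure, ENNReal.toReal_inv, smul_eq_mul,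
    ← mul_div_assoc, inv_mul_eq_div]
  exact div_le_div_of_nonneg_right hB_le measureReal_nonneg

end CondIntegral

section L1Ball

variable {ι : Type*} [Fintype ι] {R : (ι → ℝ) → ℝ} {C : ℝ}

def l1ClosedBall (x : ι → ℝ) (r : ℝ) : Set (ι → ℝ) := {θ | ∑ i, |θ i - x i| ≤ r}

lemma l1ClosedBall_zero (r : ℝ) : l1ClosedBall (0 : ι → ℝ) r = {θ | ∑ i, |θ i| ≤ r} := by
  simp [l1ClosedBall]

lemma abs_sub_le_of_mem_l1ClosedBall {x θ : ι → ℝ} {r : ℝ} (hθ : θ ∈ l1ClosedBall x r) (i : ι) :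
    |θ i - x i| ≤ r :=
  (Finset.single_le_sum (fun j _ => abs_nonneg (θ j - x j)) (Finset.mem_univ i)).trans hθ

lemma l1ClosedBall_subset_closedBall (x : ι → ℝ) (r : ℝ) :
    l1ClosedBall x r ⊆ Metric.closedBall x r := by
  intro θ hθ
  have hr : 0 ≤ r := (Finset.sum_nonneg fun i _ => abs_nonneg _).trans hθ
  exact (dist_pi_le_iff hr).2 fun i => (Real.dist_eq _ _).trans_le
    (abs_sub_le_of_mem_l1ClosedBall hθ i)

lemma l1ClosedBall_subset_l1ClosedBall {x y : ι → ℝ} {r s : ℝ}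
    (h : ∑ i, |y i - x i| + r ≤ s) : l1ClosedBall y r ⊆ l1ClosedBall x s := by
  intro θ hθ
  calc ∑ i, |θ i - x i| ≤ ∑ i, (|θ i - y i| + |y i - x i|) :=
        Finset.sum_le_sum fun i _ => abs_sub_le _ _ _
    _ = ∑ i, |θ i - y i| + ∑ i, |y i - x i| := Finset.sum_add_distrib
    _ ≤ s := by linarith [show ∑ i, |θ i - y i| ≤ r from hθ]

lemma isCompact_l1ClosedBall (x : ι → ℝ) (r : ℝ) : IsCompact (l1ClosedBall x r) :=
  Metric.isCompact_of_isClosed_isBounded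
    (isClosed_le (continuous_finsetSum _ fun i _ =>
      ((continuous_apply i).sub continuous_const).abs) continuous_const)
    (Metric.isBounded_closedBall.subset (l1ClosedBall_subset_closedBall x r))

lemma l1ClosedBall_eq_preimage_add (x : ι → ℝ) (r : ℝ) :
    l1ClosedBall x r = (-x + ·) ⁻¹' l1ClosedBall 0 r := by
  ext θ
  simp [l1ClosedBall, neg_add_eq_sub]

lemma l1ClosedBall_zero_eq_smul {r : ℝ} (hr : 0 < r) :
    l1ClosedBall (0 : ι → ℝ) r = r • l1ClosedBall 0 1 := by
  ext θ
  simp only [Set.mem_smul_set_iff_inv_smul_mem₀ hr.ne', l1ClosedBall_zero, Set.mem_ofPred_eq,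
    Pi.smul_apply, smul_eq_mul, abs_mul, abs_inv, abs_of_pos hr, ← Finset.mul_sum,
    inv_mul_le_iff₀ hr, mul_one]

lemma volume_l1ClosedBall (x : ι → ℝ) {r : ℝ} (hr : 0 < r) :
    volume (l1ClosedBall x r)
      = ENNReal.ofReal (r ^ Fintype.card ι) * volume (l1ClosedBall (0 : ι → ℝ) 1) := by
  rw [l1ClosedBall_eq_preimage_add, measure_preimage_add, l1ClosedBall_zero_eq_smul hr,
    Measure.addHaar_smul_of_nonneg volume hr.le, Module.finrank_fintype_fun_eq_card]

lemma volume_l1ClosedBall_zero_one_pos : 0 < volume (l1ClosedBall (0 : ι → ℝ) 1) := by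
  have hopen : IsOpen {θ : ι → ℝ | ∑ i, |θ i| < 1} :=
    isOpen_lt (continuous_finsetSum _ fun i _ => (continuous_apply i).abs) continuous_const
  calc 0 < volume {θ : ι → ℝ | ∑ i, |θ i| < 1} := hopen.measure_pos volume ⟨0, by simp⟩
    _ ≤ _ := measure_mono fun θ (hθ : ∑ i, |θ i| < 1) => by
      rw [l1ClosedBall_zero]; exact hθ.le

lemma measureReal_l1ClosedBall_div (x y : ι → ℝ) {r s : ℝ} (hr : 0 < r) (hs : 0 < s) :
    volume.real (l1ClosedBall x r) / volume.real (l1ClosedBall y s)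
      = (r / s) ^ Fintype.card ι := by
  have hpos := (ENNReal.toReal_pos volume_l1ClosedBall_zero_one_pos.ne'
    ((isCompact_l1ClosedBall (0 : ι → ℝ) 1).measure_lt_top.ne))
  simp only [Measure.real, volume_l1ClosedBall _ hr, volume_l1ClosedBall _ hs, ENNReal.toReal_mul,
    ENNReal.toReal_ofReal (pow_nonneg hr.le _), ENNReal.toReal_ofReal (pow_nonneg hs.le _), div_pow]
  field_simp

lemma continuous_of_abs_sub_le_mul_sum (hC : 0 ≤ C)
    (hR : ∀ θ θ', |R θ - R θ'| ≤ C * ∑ i, |θ i - θ' i|) : Continuous R := by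
  refine (LipschitzWith.of_dist_le_mul (K := ⟨C * Fintype.card ι, by positivity⟩)
    fun θ θ' => ?_).continuous
  calc dist (R θ) (R θ') ≤ C * ∑ i, |θ i - θ' i| := (Real.dist_eq _ _).trans_le (hR θ θ')
    _ ≤ C * ∑ _i : ι, dist θ θ' := by
        gcongr with i
        exact (Real.dist_eq _ _).symm.trans_le (dist_le_pi_dist θ θ' i)
    _ = C * Fintype.card ι * dist θ θ' := by
        simp only [Finset.sum_const, Finset.card_univ, nsmul_eq_mul]; ring

lemma sub_le_of_mem_l1ClosedBall (hC : 0 ≤ C) (hR : ∀ θ θ', |R θ - R θ'| ≤ C * ∑ i, |θ i - θ' i|)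
    {θ₀ θ : ι → ℝ} {r : ℝ} (hθ : θ ∈ l1ClosedBall θ₀ r) : R θ - R θ₀ ≤ C * r :=
  (le_abs_self _).trans ((hR θ θ₀).trans (mul_le_mul_of_nonneg_left hθ hC))

theorem exp_neg_mul_div_pow_le_integral_cond_l1ClosedBall (hC : 0 ≤ C)
    (hR : ∀ θ θ', |R θ - R θ'| ≤ C * ∑ i, |θ i - θ' i|) {γ r c : ℝ} {θ₀ : ι → ℝ}
    (hγ : 0 ≤ γ) (hr : 0 < r) (hc : 0 < c) (hθ₀ : ∑ i, |θ₀ i| + r ≤ c) :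
    Real.exp (-(γ * (C * r))) * (r / c) ^ Fintype.card ι
      ≤ ∫ θ, Real.exp (-γ * (R θ - R θ₀)) ∂volume[|l1ClosedBall 0 c] := by
  have hRc := continuous_of_abs_sub_le_mul_sum hC hR
  rw [← measureReal_l1ClosedBall_div θ₀ 0 hr hc]
  refine mul_measureReal_div_le_integral_cond (isCompact_l1ClosedBall θ₀ r).isClosed.measurableSet
    (l1ClosedBall_subset_l1ClosedBall (by simpa using hθ₀))
    (isCompact_l1ClosedBall 0 c).measure_lt_top.ne
    ((by fun_prop : Continuous _).continuousOn.integrableOn_compact (isCompact_l1ClosedBall 0 c))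
    (fun θ => (Real.exp_pos _).le) fun θ hθ => Real.exp_le_exp.2 ?_
  have := mul_le_mul_of_nonneg_left (sub_le_of_mem_l1ClosedBall hC hR hθ) hγ
  linarith

end L1Ball

lemma neg_log_le_of_exp_mul_div_pow_le {I x r c : ℝ} {n : ℕ} (hr : 0 < r) (hc : 0 < c)
    (hI : Real.exp (-x) * (r / c) ^ n ≤ I) : -Real.log I ≤ x + n * Real.log (c / r) := by
  have := Real.log_le_log (by positivity) hI
  rw [Real.log_mul (Real.exp_ne_zero _) (by positivity), Real.log_exp, Real.log_pow,
    ← inv_div c r, Real.log_inv] at this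
  linarith

lemma one_le_mul_max_one_div {a c d : ℝ} (hd : 0 < d) (hdc : d ≤ c) : 1 ≤ c * max a (1 / d) :=
  calc 1 ≤ c * (1 / d) := by rw [mul_one_div, one_le_div hd]; exact hdc
    _ ≤ c * max a (1 / d) := mul_le_mul_of_nonneg_left (le_max_right _ _) (hd.le.trans hdc)

lemma log_div_min_le {q γ C c d : ℝ} (hq : 0 < q) (hγ : Real.exp 1 ≤ γ) (hC : 0 < C)
    (hc : 0 < c) (hd : 0 < d) :
    Real.log (c / min (q / (γ * C)) d)
      ≤ Real.log γ - 1 + Real.log (c * max (C * Real.exp 1 / q) (1 / d)) := by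
  have hγ0 : 0 < γ := (Real.exp_pos 1).trans_le hγ
  have hγe : 1 ≤ γ / Real.exp 1 := (one_le_div (Real.exp_pos 1)).2 hγ
  have hM : 0 < c * max (C * Real.exp 1 / q) (1 / d) :=
    mul_pos hc ((one_div_pos.2 hd).trans_le (le_max_right _ _))
  have hbound : c / min (q / (γ * C)) d
      ≤ γ / Real.exp 1 * (c * max (C * Real.exp 1 / q) (1 / d)) := by
    rcases min_cases (q / (γ * C)) d with ⟨h, -⟩ | ⟨h, -⟩ <;> rw [h]
    · calc c / (q / (γ * C)) = γ / Real.exp 1 * (c * (C * Real.exp 1 / q)) := by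
            field_simp
        _ ≤ _ := by gcongr; exact le_max_left _ _
    · calc c / d = 1 * (c * (1 / d)) := by ring
        _ ≤ _ := by gcongr; exact le_max_right _ _
  calc Real.log (c / min (q / (γ * C)) d)
      ≤ Real.log (γ / Real.exp 1 * (c * max (C * Real.exp 1 / q) (1 / d))) :=
        Real.log_le_log (div_pos hc (lt_min (div_pos hq (mul_pos hγ0 hC)) hd)) hbound
    _ = Real.log γ - 1 + Real.log (c * max (C * Real.exp 1 / q) (1 / d)) := by
        rw [Real.log_mul (div_pos hγ0 (Real.exp_pos 1)).ne' hM.ne',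
          Real.log_div hγ0.ne' (Real.exp_ne_zero 1), Real.log_exp]

lemma div_log_le_mul_one_add {L q γ K : ℝ} (hγ : Real.exp 1 < γ) (hq : 0 ≤ q) (hK : 0 ≤ K)
    (h : L ≤ q * Real.log γ + q * K) : L / Real.log γ ≤ q * (1 + K) := by
  have hlogγ : 1 < Real.log γ := (Real.lt_log_iff_exp_lt ((Real.exp_pos 1).trans hγ)).2 hγ
  rw [div_le_iff₀ (by linarith)]
  nlinarith [mul_le_mul_of_nonneg_left hlogγ.le (mul_nonneg hq hK)]

theorem complexity_l1_ball_general
    (q : ℕ) (hq : 1 ≤ q) (c : ℝ) (hc : 0 < c) (C : ℝ) (hC : 0 < C)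
    (R : (Fin q → ℝ) → ℝ)
    (hR : ∀ θ θ' : Fin q → ℝ, |R θ - R θ'| ≤ C * ∑ i, |θ i - θ' i|)
    (θbar : Fin q → ℝ) (hθbar_mem : ∑ i, |θbar i| < c)
    (π : Measure (Fin q → ℝ))
    (hπ : π = (volume {θ : Fin q → ℝ | ∑ i, |θ i| ≤ c})⁻¹ •
        volume.restrict {θ : Fin q → ℝ | ∑ i, |θ i| ≤ c}) :
    ∀ γ : ℝ, Real.exp 1 < γ →
      (- Real.log (∫ θ, Real.exp (-γ * (R θ - R θbar)) ∂π)) / Real.log γ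
        ≤ (q : ℝ) * (1 + Real.log (c * max (C * Real.exp 1 / q)
            (1 / (c - ∑ i, |θbar i|)))) := by
  obtain rfl : π = volume[|l1ClosedBall 0 c] := by rw [hπ, l1ClosedBall_zero]; rfl
  intro γ hγ
  set s := ∑ i, |θbar i|
  have hq0 : (0 : ℝ) < q := by exact_mod_cast hq
  have hγ0 : 0 < γ := (Real.exp_pos 1).trans hγ
  have hcs : 0 < c - s := sub_pos.2 hθbar_mem
  set r := min (q / (γ * C)) (c - s)
  have hr : 0 < r := lt_min (by positivity) hcs
  have hγCr : γ * (C * r) ≤ q :=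
    calc γ * (C * r) ≤ γ * (C * (q / (γ * C))) := by gcongr; exact min_le_left _ _
      _ = q := by field_simp
  have hI := exp_neg_mul_div_pow_le_integral_cond_l1ClosedBall hC.le hR hγ0.le hr hc
    (by linarith [min_le_right (q / (γ * C)) (c - s)])
  rw [Fintype.card_fin] at hI
  refine div_log_le_mul_one_add hγ hq0.le
    (Real.log_nonneg (one_le_mul_max_one_div hcs (by linarith [show 0 ≤ s by positivity]))) ?_
  calc _ ≤ γ * (C * r) + q * Real.log (c / r) := neg_log_le_of_exp_mul_div_pow_le hr hc hI
    _ ≤ q + q * (Real.log γ - 1 + Real.log (c * max (C * Real.exp 1 / q) (1 / (c - s)))) := by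
        gcongr; exact log_div_min_le hq0 hγ.le hC hc hcs
    _ = _ := by ring

/-- Proposition 2.1: complexity bound for the uniform prior on an ℓ¹-ball.
If `Θ = 𝔅^q_c` is the closed ℓ¹-ball of radius `c` in `ℝ^q`, `π` is the uniform
(normalized Lebesgue) probability measure on it, `R` is `C`-Lipschitz for the ℓ¹ norm
and `θ̄` is a minimizer of `R` on `Θ` with `‖θ̄‖₁ < c`, then for every `γ > e`,
`−log ∫ exp(−γ(R(θ)−R(θ̄))) dπ / log γ ≤ q(1 + log(c·max(Ce/q, 1/(c−‖θ̄‖₁))))`. -/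
theorem complexity_l1_ball
    (q : ℕ) (hq : 1 ≤ q) (c : ℝ) (hc : 0 < c) (C : ℝ) (hC : 0 < C)
    (R : (Fin q → ℝ) → ℝ)
    (hR : ∀ θ θ' : Fin q → ℝ, |R θ - R θ'| ≤ C * ∑ i, |θ i - θ' i|)
    (θbar : Fin q → ℝ) (hθbar_mem : ∑ i, |θbar i| < c)
    (hθbar_min : ∀ θ : Fin q → ℝ, ∑ i, |θ i| ≤ c → R θbar ≤ R θ)
    (π : Measure (Fin q → ℝ))
    (hπ : π = (volume {θ : Fin q → ℝ | ∑ i, |θ i| ≤ c})⁻¹ •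
        volume.restrict {θ : Fin q → ℝ | ∑ i, |θ i| ≤ c}) :
    ∀ γ : ℝ, Real.exp 1 < γ →
      (- Real.log (∫ θ, Real.exp (-γ * (R θ - R θbar)) ∂π)) / Real.log γ
        ≤ (q : ℝ) * (1 + Real.log (c * max (C * Real.exp 1 / q)
            (1 / (c - ∑ i, |θbar i|)))) :=
  complexity_l1_ball_general q hq c hc C hC R hR θbar hθbar_mem π hπ
end

section
/- Proposition 4.3 (θ_∞ bound for uniform φ-mixing processes): Let (X_t)_{t∈ℤ} be a stationary 𝒳-valued process with ‖X₀‖_∞ := ess sup ‖X₀‖ < ∞, and for r ≥ 1 let φ(r) = sup { |P(B|A) − P(B)| : A ∈ σ(X_t, t ≤ 0) with P(A) > 0, B ∈ σ(X_t, t ≥ r) }. Then for every n ≥ 1, every 1 ≤ ℓ ≤ n, every indices 1 ≤ j₁ < … < j_ℓ ≤ n, and every 1-Lipschitz function f: 𝒳^ℓ → ℝ (𝒳^ℓ equipped with the norm ‖z‖ = Σ_{i=1}^ℓ ‖z_i‖), one has, almost surely, |E( f(X_{j₁},…,X_{j_ℓ}) | σ(X_t, t ≤ 0) ) − E f(X_{j₁},…,X_{j_ℓ})|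 ≤ 2‖X₀‖_∞ Σ_{r=1}^n φ(r); that is, θ_{∞,n}(1) ≤ 2‖X₀‖_∞ Σ_{r=1}^n φ(r). -/
open MeasureTheory ProbabilityTheory

/-!
Peel off the coordinates of `f` one at a time. Replacing `X_{j₁}` by `0` changes `f` by at most
`‖X_{j₁}‖ ≤ B`, and this difference is measurable with respect to `σ(X_t, t ≥ j₁)`, on whose sets
the conditional law `P(· | A)` of a past event `A` and `P` differ by at most `φ(j₁)`; the layer-cake
formula turns this into the bound `2Bφ(j₁)` for the difference of the two expectations.
Telescoping gives `|E(f | A) - E f| ≤ 2B Σᵢ φ(jᵢ)` for every past event `A` of positive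
probability, and such bounds on the averages over all past events bound the conditional
expectation almost surely.
-/

section

variable {Ω : Type*} {m mΩ : MeasurableSpace Ω}

theorem abs_integral_sub_le_of_abs_measureReal_sub_le_of_mem_Icc (hm : m ≤ mΩ)
    {Q P : Measure Ω} [IsFiniteMeasure Q] [IsFiniteMeasure P] {δ : ℝ}
    (hQP : ∀ s, MeasurableSet[m] s → |Q.real s - P.real s| ≤ δ)
    {W : Ω → ℝ} (hW : Measurable[m] W) {c : ℝ} (hc : 0 ≤ c)
    (hWQ : ∀ᵐ ω ∂Q, W ω ∈ Set.Icc 0 c) (hWP : ∀ᵐ ω ∂P, W ω ∈ Set.Icc 0 c) :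
    |∫ ω, W ω ∂Q - ∫ ω, W ω ∂P| ≤ c * δ := by
  have layer : ∀ μ : Measure Ω, [IsFiniteMeasure μ] → (∀ᵐ ω ∂μ, W ω ∈ Set.Icc 0 c) →
      ∫ ω, W ω ∂μ = ∫ t in Set.Ioc 0 c, μ.real {ω | t ≤ W ω} := fun μ _ hWμ =>
    (Integrable.of_bound (hW.mono hm le_rfl).aestronglyMeasurable c
      (hWμ.mono fun ω hω => by rw [Real.norm_of_nonneg hω.1]; exact hω.2))
      |>.integral_eq_integral_Ioc_meas_le (hWμ.mono fun _ h => h.1) (hWμ.mono fun _ h => h.2)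
  have tail_integrable : ∀ μ : Measure Ω, [IsFiniteMeasure μ] →
      IntegrableOn (fun t => μ.real {ω | t ≤ W ω}) (Set.Ioc 0 c) := fun μ _ =>
    (Antitone.intervalIntegrable (a := 0) (b := c) fun s t hst =>
      measureReal_mono fun ω (hω : t ≤ W ω) => hst.trans hω).1
  rw [layer Q hWQ, layer P hWP, ← integral_sub (tail_integrable Q) (tail_integrable P),
    ← Real.norm_eq_abs]
  calc _ ≤ δ * volume.real (Set.Ioc (0 : ℝ) c) :=
        norm_setIntegral_le_of_norm_le_const measure_Ioc_lt_top fun t _ =>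
          hQP _ (measurableSet_le measurable_const hW)
    _ = c * δ := by rw [Real.volume_real_Ioc_of_le hc, sub_zero, mul_comm]

theorem abs_integral_sub_le_of_abs_measureReal_sub_le (hm : m ≤ mΩ)
    {Q P : Measure Ω} [IsProbabilityMeasure Q] [IsProbabilityMeasure P] {δ : ℝ}
    (hQP : ∀ s, MeasurableSet[m] s → |Q.real s - P.real s| ≤ δ)
    {V : Ω → ℝ} (hV : Measurable[m] V) {M : ℝ}
    (hVQ : ∀ᵐ ω ∂Q, |V ω| ≤ M) (hVP : ∀ᵐ ω ∂P, |V ω| ≤ M) :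
    |∫ ω, V ω ∂Q - ∫ ω, V ω ∂P| ≤ 2 * M * δ := by
  obtain ⟨ω₀, hω₀⟩ := hVP.exists
  have hM : 0 ≤ M := (abs_nonneg _).trans hω₀
  have shift : ∀ μ : Measure Ω, [IsProbabilityMeasure μ] → (∀ᵐ ω ∂μ, |V ω| ≤ M) →
      ∫ ω, V ω + M ∂μ = ∫ ω, V ω ∂μ + M := fun μ _ hVμ => by
    rw [integral_add ((integrable_const M).mono' (hV.mono hm le_rfl).aestronglyMeasurable hVμ)
      (integrable_const M), integral_const, probReal_univ, one_smul]
  have shift_mem : ∀ μ : Measure Ω, (∀ᵐ ω ∂μ, |V ω| ≤ M) →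
      ∀ᵐ ω ∂μ, V ω + M ∈ Set.Icc 0 (2 * M) := fun μ hVμ =>
    hVμ.mono fun ω hω => by constructor <;> linarith [abs_le.1 hω]
  calc |∫ ω, V ω ∂Q - ∫ ω, V ω ∂P| = |∫ ω, V ω + M ∂Q - ∫ ω, V ω + M ∂P| := by
        rw [shift Q hVQ, shift P hVP, add_sub_add_right_eq_sub]
    _ ≤ 2 * M * δ :=
        abs_integral_sub_le_of_abs_measureReal_sub_le_of_mem_Icc hm hQP (hV.add_const M)
          (by positivity) (shift_mem Q hVQ) (shift_mem P hVP)

theorem ae_le_of_forall_setIntegral_le_of_stronglyMeasurable (hm : m ≤ mΩ) {μ : Measure Ω}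
    {g h : Ω → ℝ} (hg : Integrable g μ) (hh : Integrable h μ)
    (hg_m : StronglyMeasurable[m] g) (hh_m : StronglyMeasurable[m] h)
    (hgh : ∀ s, MeasurableSet[m] s → ∫ x in s, g x ∂μ ≤ ∫ x in s, h x ∂μ) : g ≤ᵐ[μ] h :=
  ae_of_ae_trim hm <| ae_le_of_forall_setIntegral_le (hg.trim hm hg_m) (hh.trim hm hh_m)
    fun s hs _ => by
      rw [← setIntegral_trim hm hg_m hs, ← setIntegral_trim hm hh_m hs]
      exact hgh s hs

theorem ae_abs_condExp_sub_le_of_forall_abs_setIntegral_sub_le (hm : m ≤ mΩ) {μ : Measure Ω}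
    [IsFiniteMeasure μ] {Y : Ω → ℝ} (hY : Integrable Y μ) {a C : ℝ}
    (h : ∀ s, MeasurableSet[m] s → |∫ ω in s, Y ω ∂μ - μ.real s * a| ≤ μ.real s * C) :
    ∀ᵐ ω ∂μ, |μ[Y|m] ω - a| ≤ C := by
  have setIntegral_const_eq : ∀ b : ℝ, ∀ s, ∫ _ in s, b ∂μ = μ.real s * b := fun b s => by
    rw [setIntegral_const, smul_eq_mul]
  have upper : μ[Y|m] ≤ᵐ[μ] fun _ => a + C :=
    ae_le_of_forall_setIntegral_le_of_stronglyMeasurable hm integrable_condExp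
      (integrable_const _) stronglyMeasurable_condExp stronglyMeasurable_const fun s hs => by
        rw [setIntegral_condExp hm hY hs, setIntegral_const_eq]
        linarith [(abs_le.1 (h s hs)).2]
  have lower : (fun _ => a - C) ≤ᵐ[μ] μ[Y|m] :=
    ae_le_of_forall_setIntegral_le_of_stronglyMeasurable hm (integrable_const _)
      integrable_condExp stronglyMeasurable_const stronglyMeasurable_condExp fun s hs => by
        rw [setIntegral_condExp hm hY hs, setIntegral_const_eq]
        linarith [(abs_le.1 (h s hs)).1]
  filter_upwards [upper, lower] with ω hu hl
  exact abs_sub_le_iff.2 ⟨by linarith, by linarith⟩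

theorem cond_real_apply {μ : Measure Ω} {A : Set Ω} (hA : MeasurableSet A) (s : Set Ω) :
    (μ[|A]).real s = μ.real (A ∩ s) / μ.real A := by
  rw [measureReal_def, cond_apply hA, ENNReal.toReal_mul, ENNReal.toReal_inv, inv_mul_eq_div,
    measureReal_def, measureReal_def]

theorem integral_cond_eq_inv_mul_setIntegral {μ : Measure Ω} {s : Set Ω} {Y : Ω → ℝ} :
    ∫ ω, Y ω ∂μ[|s] = (μ.real s)⁻¹ * ∫ ω in s, Y ω ∂μ := by
  rw [ProbabilityTheory.cond, integral_smul_measure, ENNReal.toReal_inv, smul_eq_mul,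
    measureReal_def]

theorem abs_setIntegral_sub_le_of_abs_integral_cond_sub_le {μ : Measure Ω} [IsFiniteMeasure μ]
    {s : Set Ω} {Y : Ω → ℝ} {a C : ℝ} (h : μ s ≠ 0 → |∫ ω, Y ω ∂μ[|s] - a| ≤ C) :
    |∫ ω in s, Y ω ∂μ - μ.real s * a| ≤ μ.real s * C := by
  by_cases hs : μ s = 0
  · simp [Measure.restrict_eq_zero.2 hs, measureReal_def, hs]
  have hpos : 0 < μ.real s := ENNReal.toReal_pos hs (measure_ne_top μ s)
  calc |∫ ω in s, Y ω ∂μ - μ.real s * a| = μ.real s * |∫ ω, Y ω ∂μ[|s] - a| := by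
        rw [integral_cond_eq_inv_mul_setIntegral, ← abs_of_pos hpos, ← abs_mul, abs_of_pos hpos,
          mul_sub, mul_inv_cancel_left₀ hpos.ne']
    _ ≤ μ.real s * C := mul_le_mul_of_nonneg_left (h hs) hpos.le

end

section SumLipschitz

variable {E : Type*} [NormedAddCommGroup E] {ℓ : ℕ} {f : (Fin ℓ → E) → ℝ}

theorem continuous_of_abs_sub_le_sum_norm (hf : ∀ x y, |f x - f y| ≤ ∑ i, ‖x i - y i‖) :
    Continuous f := by
  refine (LipschitzWith.of_dist_le_mul (K := ℓ) fun x y => ?_).continuous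
  calc dist (f x) (f y) ≤ ∑ i, ‖x i - y i‖ := hf x y
    _ ≤ ∑ _i : Fin ℓ, dist x y := Finset.sum_le_sum fun i _ => by
        rw [← dist_eq_norm]; exact dist_le_pi_dist x y i
    _ = ℓ * dist x y := by simp

theorem abs_le_of_abs_sub_le_sum_norm (hf : ∀ x y, |f x - f y| ≤ ∑ i, ‖x i - y i‖)
    (x : Fin ℓ → E) : |f x| ≤ |f 0| + ∑ i, ‖x i‖ := by
  have := hf x 0
  simp only [Pi.zero_apply, sub_zero] at this
  linarith [abs_sub_abs_le_abs_sub (f x) (f 0)]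

variable [SecondCountableTopology E] [MeasurableSpace E] [BorelSpace E]
  {Ω : Type*} [mΩ : MeasurableSpace Ω]

theorem integrable_comp_of_abs_sub_le_sum_norm {μ : Measure Ω} [IsFiniteMeasure μ]
    (hf : ∀ x y, |f x - f y| ≤ ∑ i, ‖x i - y i‖) {Y : Fin ℓ → Ω → E}
    (hY : ∀ i, Measurable (Y i)) {B : ℝ} (hYB : ∀ i, ∀ᵐ ω ∂μ, ‖Y i ω‖ ≤ B) :
    Integrable (fun ω => f fun i => Y i ω) μ := by
  refine .of_bound ((continuous_of_abs_sub_le_sum_norm hf).measurable.comp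
    (measurable_pi_lambda _ hY)).aestronglyMeasurable (|f 0| + ℓ * B) ?_
  filter_upwards [ae_all_iff.2 hYB] with ω hω
  calc ‖f fun i => Y i ω‖ ≤ |f 0| + ∑ i, ‖Y i ω‖ := abs_le_of_abs_sub_le_sum_norm hf _
    _ ≤ |f 0| + ℓ * B := by
      gcongr
      simpa using Finset.sum_le_sum fun i (_ : i ∈ Finset.univ) => hω i

theorem abs_integral_comp_sub_le_two_mul_sum {Q P : Measure Ω}
    [IsProbabilityMeasure Q] [IsProbabilityMeasure P] (hQP : Q ≪ P)
    (G : Fin ℓ → MeasurableSpace Ω) (hG : ∀ i, G i ≤ mΩ) (Y : Fin ℓ → Ω → E)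
    (hY : ∀ i k, i ≤ k → Measurable[G i] (Y k)) {B : ℝ} (hYB : ∀ i, ∀ᵐ ω ∂P, ‖Y i ω‖ ≤ B)
    {c : Fin ℓ → ℝ} (hc : ∀ i s, MeasurableSet[G i] s → |Q.real s - P.real s| ≤ c i)
    (hf : ∀ x y, |f x - f y| ≤ ∑ i, ‖x i - y i‖) :
    |∫ ω, f (fun i => Y i ω) ∂Q - ∫ ω, f (fun i => Y i ω) ∂P| ≤ 2 * B * ∑ i, c i := by
  induction ℓ with
  | zero =>
    have hconst : ∀ ω, (fun i : Fin 0 => Y i ω) = 0 := fun ω => Subsingleton.elim _ _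
    simp only [hconst, integral_const, probReal_univ, one_smul, sub_self, abs_zero,
      Finset.univ_eq_empty, Finset.sum_empty, mul_zero, le_refl]
  | succ ℓ ih =>
    set g : (Fin ℓ → E) → ℝ := fun x => f (Fin.cons 0 x)
    have hg : ∀ x y, |g x - g y| ≤ ∑ i, ‖x i - y i‖ := fun x y => by
      simpa [g, Fin.sum_univ_succ] using hf (Fin.cons 0 x) (Fin.cons 0 y)
    have hD_bound : ∀ᵐ ω ∂P, |f (fun i => Y i ω) - g (fun i => Y i.succ ω)| ≤ B := by
      filter_upwards [hYB 0] with ω hω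
      refine le_trans ?_ hω
      simpa [g, Fin.sum_univ_succ] using hf (fun i => Y i ω) (Fin.cons 0 fun i => Y i.succ ω)
    have hD_meas : Measurable[G 0] fun ω => f (fun i => Y i ω) - g (fun i => Y i.succ ω) :=
      ((continuous_of_abs_sub_le_sum_norm hf).measurable.comp
        (@measurable_pi_lambda _ _ _ (G 0) _ _ fun i => hY 0 i (Fin.zero_le i))).sub
      ((continuous_of_abs_sub_le_sum_norm hg).measurable.comp
        (@measurable_pi_lambda _ _ _ (G 0) _ _ fun i => hY 0 i.succ (Fin.zero_le _)))
    have head := abs_integral_sub_le_of_abs_measureReal_sub_le (hG 0) (hc 0) hD_meas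
      (hQP.ae_le hD_bound) hD_bound
    have tail := ih (fun i => G i.succ) (fun i => hG i.succ) (fun i => Y i.succ)
      (fun i k hik => hY i.succ k.succ (Fin.succ_le_succ_iff.2 hik)) (fun i => hYB i.succ)
      (fun i => hc i.succ) hg
    have hYm : ∀ i, Measurable (Y i) := fun i => (hY i i le_rfl).mono (hG i) le_rfl
    have hint : ∀ μ : Measure Ω, [IsProbabilityMeasure μ] → μ ≪ P →
        Integrable (fun ω => f fun i => Y i ω) μ ∧
          Integrable (fun ω => g fun i => Y i.succ ω) μ := fun μ _ hμ =>
      ⟨integrable_comp_of_abs_sub_le_sum_norm hf hYm fun i => hμ.ae_le (hYB i),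
        integrable_comp_of_abs_sub_le_sum_norm hg (fun i => hYm i.succ)
          fun i => hμ.ae_le (hYB i.succ)⟩
    rw [integral_sub (hint Q hQP).1 (hint Q hQP).2,
      integral_sub (hint P .rfl).1 (hint P .rfl).2] at head
    rw [Fin.sum_univ_succ, mul_add]
    calc _ = |(∫ ω, f (fun i => Y i ω) ∂Q - ∫ ω, g (fun i => Y i.succ ω) ∂Q
            - (∫ ω, f (fun i => Y i ω) ∂P - ∫ ω, g (fun i => Y i.succ ω) ∂P))
          + (∫ ω, g (fun i => Y i.succ ω) ∂Q - ∫ ω, g (fun i => Y i.succ ω) ∂P)| := by ring_nf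
      _ ≤ _ := (abs_add_le _ _).trans (add_le_add head tail)

end SumLipschitz

section

variable {ι E Ω : Type*} [MeasurableSpace E]

abbrev futureSigma [Preorder ι] (X : ι → Ω → E) (t : ι) : MeasurableSpace Ω :=
  ⨆ (s : ι) (_ : t ≤ s), MeasurableSpace.comap (X s) inferInstance

abbrev pastSigma [Preorder ι] (X : ι → Ω → E) (t : ι) : MeasurableSpace Ω :=
  ⨆ (s : ι) (_ : s ≤ t), MeasurableSpace.comap (X s) inferInstance

theorem pastSigma_le [Preorder ι] [mΩ : MeasurableSpace Ω] {X : ι → Ω → E}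
    (hX : ∀ t, Measurable (X t)) (t : ι) :
    pastSigma X t ≤ mΩ :=
  iSup₂_le fun s _ => (hX s).comap_le

theorem futureSigma_le [Preorder ι] [mΩ : MeasurableSpace Ω] {X : ι → Ω → E}
    (hX : ∀ t, Measurable (X t)) (t : ι) :
    futureSigma X t ≤ mΩ :=
  iSup₂_le fun s _ => (hX s).comap_le

theorem measurable_futureSigma [Preorder ι] {X : ι → Ω → E} {s t : ι} (hst : s ≤ t) :
    Measurable[futureSigma X s] (X t) :=
  Measurable.of_comap_le <|
    le_iSup₂ (f := fun t (_ : s ≤ t) => MeasurableSpace.comap (X t) inferInstance) t hst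

theorem identDistrib_of_map_shift_eq [AddZeroClass ι] [MeasurableSpace Ω] {P : Measure Ω}
    {X : ι → Ω → E} (hX : ∀ t, Measurable (X t))
    (hstat : ∀ k, Measure.map (fun ω t => X (t + k) ω) P = Measure.map (fun ω t => X t ω) P)
    (t : ι) : IdentDistrib (X t) (X 0) P P := by
  have h : IdentDistrib (fun ω s => X (s + t) ω) (fun ω s => X s ω) P P :=
    ⟨(measurable_pi_lambda _ fun s => hX _).aemeasurable,
      (measurable_pi_lambda _ hX).aemeasurable, hstat t⟩
  simpa [Function.comp_def] using h.comp (measurable_pi_apply 0)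

end

theorem sum_toNat_le_sum_Icc {ι : Type*} [Fintype ι] {j : ι → ℤ} (hj : Function.Injective j)
    {n : ℕ} (hj1 : ∀ i, 1 ≤ j i) (hjn : ∀ i, j i ≤ n) {φ : ℕ → ℝ} (hφ : ∀ r, 0 ≤ φ r) :
    ∑ i, φ (j i).toNat ≤ ∑ r ∈ Finset.Icc 1 n, φ r := by
  have hinj : Function.Injective fun i => (j i).toNat := fun a b hab => by
    have := hj1 a; have := hj1 b
    exact hj (by simp only at hab; omega)
  rw [← Finset.sum_image hinj.injOn]
  refine Finset.sum_le_sum_of_subset_of_nonneg (fun r hr => ?_) fun r _ _ => hφ r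
  obtain ⟨i, -, rfl⟩ := Finset.mem_image.1 hr
  have := hj1 i; have := hjn i
  rw [Finset.mem_Icc]
  omega

theorem theta_infty_bound_phi_mixing_general
    {𝒳 : Type*} [NormedAddCommGroup 𝒳]
    [SecondCountableTopology 𝒳] [MeasurableSpace 𝒳] [BorelSpace 𝒳]
    {Ω : Type*} [MeasurableSpace Ω] (P : Measure Ω) [IsProbabilityMeasure P]
    (X : ℤ → Ω → 𝒳) (hXmeas : ∀ t, Measurable (X t))
    (hstat : ∀ k : ℤ, Measure.map (fun ω (t : ℤ) => X (t + k) ω) P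
      = Measure.map (fun ω (t : ℤ) => X t ω) P)
    (B : ℝ) (hB : ∀ᵐ ω ∂P, ‖X 0 ω‖ ≤ B)
    (φ : ℕ → ℝ) (hφ0 : ∀ r, 0 ≤ φ r)
    (hφ : ∀ r : ℕ, 1 ≤ r → ∀ A B' : Set Ω,
      MeasurableSet[⨆ (t : ℤ) (_ : t ≤ 0), MeasurableSpace.comap (X t) inferInstance] A →
      MeasurableSet[⨆ (t : ℤ) (_ : (r : ℤ) ≤ t), MeasurableSpace.comap (X t) inferInstance] B' →
      P A ≠ 0 →
      |(P (A ∩ B')).toReal / (P A).toReal - (P B').toReal| ≤ φ r)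
    (n : ℕ) (ℓ : ℕ)
    (j : Fin ℓ → ℤ) (hjmono : StrictMono j)
    (hj1 : ∀ i, 1 ≤ j i) (hjn : ∀ i, j i ≤ (n : ℤ))
    (f : (Fin ℓ → 𝒳) → ℝ)
    (hf : ∀ x y : Fin ℓ → 𝒳, |f x - f y| ≤ ∑ i, ‖x i - y i‖) :
    ∀ᵐ ω ∂P,
      |(P[(fun ω' => f (fun i => X (j i) ω')) |
            ⨆ (t : ℤ) (_ : t ≤ 0), MeasurableSpace.comap (X t) inferInstance]) ω
        - ∫ ω', f (fun i => X (j i) ω') ∂P|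
        ≤ 2 * B * ∑ r ∈ Finset.Icc 1 n, φ r := by
  have hXB : ∀ t, ∀ᵐ ω ∂P, ‖X t ω‖ ≤ B := fun t =>
    (identDistrib_of_map_shift_eq hXmeas hstat t).symm.ae_snd
      (measurableSet_le measurable_norm measurable_const) hB
  have hB0 : 0 ≤ B := (norm_nonneg _).trans hB.exists.choose_spec
  have hevent : ∀ A, MeasurableSet[pastSigma X 0] A → P A ≠ 0 →
      |∫ ω, f (fun i => X (j i) ω) ∂P[|A] - ∫ ω, f (fun i => X (j i) ω) ∂P|
        ≤ 2 * B * ∑ i, φ (j i).toNat := by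
    intro A hA hPA
    have := cond_isProbabilityMeasure hPA
    refine abs_integral_comp_sub_le_two_mul_sum cond_absolutelyContinuous
      (fun i => futureSigma X (j i)) (fun i => futureSigma_le hXmeas _) (fun i => X (j i))
      (fun i k hik => measurable_futureSigma (hjmono.monotone hik)) (fun i => hXB (j i))
      (fun i s hs => ?_) hf
    rw [cond_real_apply (pastSigma_le hXmeas 0 A hA)]
    have := hj1 i
    refine hφ _ (by omega) A s hA ?_ hPA
    rwa [Int.toNat_of_nonneg (by omega)]
  filter_upwards [ae_abs_condExp_sub_le_of_forall_abs_setIntegral_sub_le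
    (pastSigma_le hXmeas 0)
    (integrable_comp_of_abs_sub_le_sum_norm hf (fun i => hXmeas (j i)) fun i => hXB (j i))
    fun A hA => abs_setIntegral_sub_le_of_abs_integral_cond_sub_le (hevent A hA)] with ω hω
  exact hω.trans (mul_le_mul_of_nonneg_left
    (sum_toNat_le_sum_Icc hjmono.injective hj1 hjn hφ0) (by positivity))

/-- Proposition 4.3 (θ∞ bound for uniform φ-mixing processes): for a stationary
bounded process `X` with uniform mixing coefficients bounded by `φ(r)`, for all
indices `1 ≤ j₁ < … < j_ℓ ≤ n` and every 1-Lipschitz `f` (sum norm),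
`|E(f(X_{j₁},…,X_{j_ℓ}) | σ(X_t, t ≤ 0)) − E f| ≤ 2‖X₀‖_∞ Σ_{r=1}^n φ(r)` a.s. -/
theorem theta_infty_bound_phi_mixing
    {𝒳 : Type*} [NormedAddCommGroup 𝒳] [InnerProductSpace ℝ 𝒳] [CompleteSpace 𝒳]
    [SecondCountableTopology 𝒳] [MeasurableSpace 𝒳] [BorelSpace 𝒳]
    {Ω : Type*} [MeasurableSpace Ω] (P : Measure Ω) [IsProbabilityMeasure P]
    (X : ℤ → Ω → 𝒳) (hXmeas : ∀ t, Measurable (X t))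
    (hstat : ∀ k : ℤ, Measure.map (fun ω (t : ℤ) => X (t + k) ω) P
      = Measure.map (fun ω (t : ℤ) => X t ω) P)
    (B : ℝ) (hB : ∀ᵐ ω ∂P, ‖X 0 ω‖ ≤ B)
    (φ : ℕ → ℝ) (hφ0 : ∀ r, 0 ≤ φ r)
    (hφ : ∀ r : ℕ, 1 ≤ r → ∀ A B' : Set Ω,
      MeasurableSet[⨆ (t : ℤ) (_ : t ≤ 0), MeasurableSpace.comap (X t) inferInstance] A →
      MeasurableSet[⨆ (t : ℤ) (_ : (r : ℤ) ≤ t), MeasurableSpace.comap (X t) inferInstance] B' →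
      P A ≠ 0 →
      |(P (A ∩ B')).toReal / (P A).toReal - (P B').toReal| ≤ φ r)
    (n : ℕ) (hn : 1 ≤ n) (ℓ : ℕ) (hℓ1 : 1 ≤ ℓ) (hℓn : ℓ ≤ n)
    (j : Fin ℓ → ℤ) (hjmono : StrictMono j)
    (hj1 : ∀ i, 1 ≤ j i) (hjn : ∀ i, j i ≤ (n : ℤ))
    (f : (Fin ℓ → 𝒳) → ℝ)
    (hf : ∀ x y : Fin ℓ → 𝒳, |f x - f y| ≤ ∑ i, ‖x i - y i‖) :
    ∀ᵐ ω ∂P,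
      |(P[(fun ω' => f (fun i => X (j i) ω')) |
            ⨆ (t : ℤ) (_ : t ≤ 0), MeasurableSpace.comap (X t) inferInstance]) ω
        - ∫ ω', f (fun i => X (j i) ω') ∂P|
        ≤ 2 * B * ∑ r ∈ Finset.Icc 1 n, φ r :=
  theta_infty_bound_phi_mixing_general P X hXmeas hstat B hB φ hφ0 hφ n ℓ j hjmono hj1 hjn f hf
end
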